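/- Let r ≥ 2, let 1 ≤ k ≤ ⌊r/2⌋, let (x_1,…,x_r) ∈ X_{r,k}, and set x_0 = 0. Let [L_1,R_1] and [L_2,R_2] be segments with L_1 < L_2, and let i, j be positive integers with i ∈ [L_1,R_1], i + j ∈ [L_2,R_2], L_2 − L_1 > j, and min{i,j} ≤ k. Then x_i + x_j < x_{i+j}. -/

import Mathlib

open Finset

/-- A finite hypergraph: a finite vertex set (of naturals) together with a
finite set of edges, each edge being a subset of the vertex set. -/
structure HGraph where
  verts : Finset ℕ
  edges : Finset (Finset ℕ)
  edge_sub : ∀ e ∈ edges, e ⊆ verts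

namespace HGraph

/-- `H` is `r`-uniform if every edge has exactly `r` vertices. -/
def IsUniform (r : ℕ) (H : HGraph) : Prop := ∀ e ∈ H.edges, e.card = r

/-- `H` contains a copy of `F` (i.e. `F` is a subgraph of `H` after an injective
relabelling of the vertices of `F`). -/
def ContainsCopy (F H : HGraph) : Prop :=
  ∃ f : ℕ → ℕ, Set.InjOn f ↑F.verts ∧ (∀ v ∈ F.verts, f v ∈ H.verts) ∧
    ∀ e ∈ F.edges, e.image f ∈ H.edges

/-- `H` is `𝓕`-free: it contains no member of `𝓕` as a subgraph. -/
def Free (𝓕 : Set HGraph) (H : HGraph) : Prop := ∀ F ∈ 𝓕, ¬ F.ContainsCopy H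

/-- `f` is a homomorphism from `F` to `H`: the image of every edge of `F` is an
edge of `H`. -/
def IsHom (f : ℕ → ℕ) (F H : HGraph) : Prop :=
  (∀ v ∈ F.verts, f v ∈ H.verts) ∧ ∀ e ∈ F.edges, e.image f ∈ H.edges

/-- `H` is `𝓕`-hom-free: no member of `𝓕` admits a homomorphism to `H`. -/
def HomFree (𝓕 : Set HGraph) (H : HGraph) : Prop :=
  ∀ F ∈ 𝓕, ∀ f : ℕ → ℕ, ¬ IsHom f F H

/-- The degree of a vertex: the number of edges containing it. -/
def degree (H : HGraph) (v : ℕ) : ℕ := (H.edges.filter (fun e => v ∈ e)).card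

/-- `H` is `r`-partite: the vertices can be coloured with `r` colours so that every
edge contains exactly one vertex of each colour. -/
def Partite (r : ℕ) (H : HGraph) : Prop :=
  ∃ f : ℕ → Fin r, ∀ e ∈ H.edges, ∀ c : Fin r, (e.filter (fun v => f v = c)).card = 1

/-- `H` and `G` are isomorphic hypergraphs. -/
def Isomorphic (H G : HGraph) : Prop :=
  ∃ f : ℕ → ℕ, Set.BijOn f ↑H.verts ↑G.verts ∧ H.edges.image (Finset.image f) = G.edges

end HGraph

/-- The Turán number `ex(n, 𝓕)`: the maximum number of edges in an `𝓕`-free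
`r`-uniform hypergraph on `n` vertices. -/
noncomputable def exNum (r n : ℕ) (𝓕 : Set HGraph) : ℕ :=
  sSup {m : ℕ | ∃ H : HGraph, H.verts = Finset.range n ∧ H.IsUniform r ∧
    H.Free 𝓕 ∧ H.edges.card = m}

/-- The Turán density `π(𝓕) = lim_{n → ∞} ex(n, 𝓕) / (n choose r)`. -/
noncomputable def turanDensity (r : ℕ) (𝓕 : Set HGraph) : ℝ :=
  Filter.lim (Filter.map (fun n : ℕ => (exNum r n 𝓕 : ℝ) / (n.choose r : ℝ)) Filter.atTop)

/-- The three edges of the `(r-i,i)`-tent on vertex set `{1, …, 2r-1}`. -/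
def tentEdges (r i : ℕ) : Finset (Finset ℕ) :=
  {Finset.Icc 1 r,
   Finset.Icc 1 i ∪ Finset.Icc (r + 1) (2 * r - i - 1) ∪ {2 * r - 1},
   Finset.Icc (i + 1) r ∪ Finset.Icc (2 * r - i) (2 * r - 1)}

/-- The `(r-i,i)`-tent `Δ_{(r-i,i)}`. -/
def tent (r i : ℕ) : HGraph where
  verts := Finset.Icc 1 (2 * r - 1) ∪ (tentEdges r i).biUnion id
  edges := tentEdges r i
  edge_sub := fun e he =>
    (Finset.subset_biUnion_of_mem id he).trans Finset.subset_union_right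

/-- The family `𝓕_{r,k} = {Δ_{(r-i,i)} : 1 ≤ i ≤ k}`. -/
def tentFamily (r k : ℕ) : Set HGraph := {H | ∃ i, 1 ≤ i ∧ i ≤ k ∧ H = tent r i}

/-- The Lagrangian of a hypergraph: the maximum of `∑_{e ∈ E} ∏_{v ∈ e} w v` over
nonnegative vertex weightings summing to `1`. -/
noncomputable def lagrangian (H : HGraph) : ℝ :=
  sSup {s : ℝ | ∃ w : ℕ → ℝ, (∀ v, 0 ≤ w v) ∧ (∑ v ∈ H.verts, w v) = 1 ∧
    s = ∑ e ∈ H.edges, ∏ v ∈ e, w v}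

/-- The blowup density `b(H) = r! · L(H)`. -/
noncomputable def blowupDensity (r : ℕ) (H : HGraph) : ℝ :=
  (r.factorial : ℝ) * lagrangian H

/-- Membership in the set `X_{r,k}`: `0 < x 1 ≤ x 2 ≤ ⋯ ≤ x r = 1`, and
`x i + x j ≤ x (i+j)` whenever `1 ≤ i ≤ k` and `i ≤ j ≤ r - i`. -/
def memX (r k : ℕ) (x : ℕ → ℝ) : Prop :=
  0 < x 1 ∧ (∀ i, 1 ≤ i → i < r → x i ≤ x (i + 1)) ∧ x r = 1 ∧
    ∀ i j, 1 ≤ i → i ≤ k → i ≤ j → i + j ≤ r → x i + x j ≤ x (i + j)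

/-- The interval `[L, R]` is uniform for `x`: `x i = x L + (i - L) * x 1` on it. -/
def UniformIntv (x : ℕ → ℝ) (L R : ℕ) : Prop :=
  ∀ i, L ≤ i → i ≤ R → x i = x L + ((i - L : ℕ) : ℝ) * x 1

/-- `[L, R]` is a segment: a uniform interval (inside `[0, r]`) that is not properly
contained in any other uniform interval. -/
def IsSegment (r : ℕ) (x : ℕ → ℝ) (L R : ℕ) : Prop :=
  L ≤ R ∧ R ≤ r ∧ UniformIntv x L R ∧
    ∀ L' R', L' ≤ L → R ≤ R' → R' ≤ r → UniformIntv x L' R' → L' = L ∧ R' = R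

/-- Shannon entropy (base 2) of a finitely supported distribution `p` on `s`. -/
noncomputable def ent {α : Type*} (s : Finset α) (p : α → ℝ) : ℝ :=
  ∑ a ∈ s, -(p a * Real.logb 2 (p a))

/-- Entropy of the pushforward of `p` along `g` (the entropy of `g(X)`). -/
noncomputable def pushEnt {α β : Type*} [DecidableEq β] (s : Finset α) (p : α → ℝ)
    (g : α → β) : ℝ :=
  ent (s.image g) (fun b => ∑ a ∈ s.filter (fun a => g a = b), p a)

/-- All tuples in `V(H)^r`. -/
def tupleSpace (r : ℕ) (H : HGraph) : Finset (Fin r → ℕ) :=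
  Fintype.piFinset fun _ : Fin r => H.verts

/-- The joint entropy `H(X_1, …, X_r)` of a random tuple with distribution `p`. -/
noncomputable def jointEnt (r : ℕ) (H : HGraph) (p : (Fin r → ℕ) → ℝ) : ℝ :=
  ent (tupleSpace r H) p

/-- The entropy `H(X_i, X_{i+1}, …, X_r)` of the suffix starting at position `i`
(1-indexed) of a random tuple with distribution `p`. -/
noncomputable def suffixEnt (r : ℕ) (H : HGraph) (p : (Fin r → ℕ) → ℝ) (i : ℕ) : ℝ :=
  pushEnt (tupleSpace r H) p (fun t (j : Fin r) => if i - 1 ≤ (j : ℕ) then t j else 0)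

/-- The entropy `H(X_{j+1})` of the single coordinate `j` (0-indexed). -/
noncomputable def coordEnt (r : ℕ) (H : HGraph) (p : (Fin r → ℕ) → ℝ) (j : Fin r) : ℝ :=
  pushEnt (tupleSpace r H) p (fun t => t j)

/-- `p` is the distribution of a random edge with uniform ordering on `H`:
nonnegative, total mass one, supported on tuples whose value set is an edge, and
exchangeable (invariant under permutations of the coordinates). -/
def IsRandomEdge (r : ℕ) (H : HGraph) (p : (Fin r → ℕ) → ℝ) : Prop :=
  (∀ t, 0 ≤ p t) ∧
  (∑ t ∈ tupleSpace r H, p t = 1) ∧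
  (∀ t, p t ≠ 0 → Finset.image t Finset.univ ∈ H.edges) ∧
  (∀ σ : Equiv.Perm (Fin r), ∀ t, p (t ∘ σ) = p t)

/-- Every pair of distinct vertices lies in a common edge. -/
def TwoCovered (H : HGraph) : Prop :=
  ∀ u ∈ H.verts, ∀ v ∈ H.verts, u ≠ v → ∃ e ∈ H.edges, u ∈ e ∧ v ∈ e

/-- `G` is a blowup of `G0`. -/
def IsBlowup (G0 G : HGraph) : Prop :=
  ∃ B : ℕ → Finset ℕ,
    (∀ v ∈ G0.verts, (B v).Nonempty) ∧
    (∀ u ∈ G0.verts, ∀ v ∈ G0.verts, u ≠ v → Disjoint (B u) (B v)) ∧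
    G.verts = G0.verts.biUnion B ∧
    ∀ e : Finset ℕ, e ∈ G.edges ↔
      ∃ e0 ∈ G0.edges, e ⊆ e0.biUnion B ∧ ∀ v ∈ e0, (e ∩ B v).card = 1

/-- `G` is symmetrised: a blowup of a 2-covered `r`-uniform hypergraph. -/
def Symmetrised (r : ℕ) (G : HGraph) : Prop :=
  ∃ G0 : HGraph, G0.IsUniform r ∧ TwoCovered G0 ∧ IsBlowup G0 G

/-- The family `𝓣_{r,k}` of `r`-uniform hypergraphs with exactly three edges
`A, B, C` such that `A ⊆ B ∪ C`, `(B ∩ C) \ A ≠ ∅` and `|A ∩ B| ≥ r - k`. -/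
def TFamily (r k : ℕ) : Set HGraph :=
  {H | H.IsUniform r ∧ ∃ A B C : Finset ℕ,
    H.verts = A ∪ B ∪ C ∧ H.edges = {A, B, C} ∧
    A ≠ B ∧ A ≠ C ∧ B ≠ C ∧
    A ⊆ B ∪ C ∧ ((B ∩ C) \ A).Nonempty ∧ r - k ≤ (A ∩ B).card}

/-- `H` is `Lset`-intersecting: any two distinct edges intersect in a number of
vertices belonging to `Lset`. -/
def LIntersecting (Lset : Set ℕ) (H : HGraph) : Prop :=
  ∀ e ∈ H.edges, ∀ e' ∈ H.edges, e ≠ e' → (e ∩ e').card ∈ Lset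

/-- `H` is a `λ`-tent for the partition `lam = (λ_1, …, λ_m)` of `r`: it has
`m + 1` edges `e 0, e 1, …, e m`, each of size `r`, with `|e 0 ∩ e i| = λ_i`,
the sets `e 0 ∩ e 1, …, e 0 ∩ e m` partitioning `e 0`, and a vertex `v` with
`e i ∩ e j = {v}` for all `1 ≤ i < j ≤ m`. -/
def IsGeneralTent (r : ℕ) (lam : List ℕ) (H : HGraph) : Prop :=
  ∃ e : ℕ → Finset ℕ,
    H.verts = (Finset.range (lam.length + 1)).biUnion e ∧
    H.edges = (Finset.range (lam.length + 1)).image e ∧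
    H.edges.card = lam.length + 1 ∧
    (∀ i ∈ Finset.range (lam.length + 1), (e i).card = r) ∧
    (∀ i, 1 ≤ i → i ≤ lam.length → (e 0 ∩ e i).card = lam.getD (i - 1) 0) ∧
    e 0 = (Finset.Icc 1 lam.length).biUnion (fun i => e 0 ∩ e i) ∧
    (∀ i j, 1 ≤ i → i < j → j ≤ lam.length → Disjoint (e 0 ∩ e i) (e 0 ∩ e j)) ∧
    (∃ v : ℕ, ∀ i j, 1 ≤ i → i < j → j ≤ lam.length → e i ∩ e j = {v})

/-- The balanced complete `r`-partite `r`-uniform hypergraph `T^r(n)` on the vertex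
set `{0, …, n-1}`, with parts given by residues modulo `r`: the edges are exactly
the `r`-subsets whose vertices have pairwise distinct residues mod `r`, i.e. those
meeting each part in exactly one vertex. -/
def turanGraph (r n : ℕ) : HGraph where
  verts := Finset.range n
  edges := (Finset.powersetCard r (Finset.range n)).filter
    (fun e => ∀ u ∈ e, ∀ v ∈ e, u ≠ v → u % r ≠ v % r)
  edge_sub := by
    intro e he
    simp only [Finset.mem_filter, Finset.mem_powersetCard] at he
    exact he.1.1

/-!
If `x_i + x_j = x_{i+j}`, then for every `t ∈ [L_1 + j, i + j]` the two inequalities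
`x_t + (i + j - t) x_1 ≤ x_{i+j}` (add `x_1` repeatedly) and
`x_{i+j} = x_{t-j} + (i + j - t) x_1 + x_j ≤ x_t + (i + j - t) x_1` (uniformity of
`[L_1, R_1]`, then superadditivity) are equalities. So `[L_1 + j, i + j]` is uniform; it
overlaps `[L_2, R_2]`, and their union is a uniform interval properly extending
`[L_2, R_2]` to the left, contradicting maximality.
-/

namespace UniformIntv

variable {x : ℕ → ℝ} {L R : ℕ}

theorem mono {R' : ℕ} (h : UniformIntv x L R) (hR : R' ≤ R) : UniformIntv x L R' :=
  fun t hLt htR => h t hLt (htR.trans hR)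

theorem eq_add_mul (h : UniformIntv x L R) {a b : ℕ} (hLa : L ≤ a) (hab : a ≤ b)
    (hbR : b ≤ R) : x b = x a + ((b - a : ℕ) : ℝ) * x 1 := by
  rw [h b (hLa.trans hab) hbR, h a hLa (hab.trans hbR)]
  push_cast [Nat.cast_sub hab, Nat.cast_sub hLa, Nat.cast_sub (hLa.trans hab)]
  ring

theorem of_add_mul_eq (h : ∀ t, L ≤ t → t ≤ R → x t + ((R - t : ℕ) : ℝ) * x 1 = x R) :
    UniformIntv x L R := by
  intro t hLt htR
  have hL := h L le_rfl (hLt.trans htR)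
  have ht := h t hLt htR
  push_cast [Nat.cast_sub htR, Nat.cast_sub (hLt.trans htR), Nat.cast_sub hLt] at hL ht ⊢
  linarith

theorem union {L' R' : ℕ} (h : UniformIntv x L R) (h' : UniformIntv x L' R')
    (hLL' : L ≤ L') (hL'R : L' ≤ R) : UniformIntv x L R' := by
  intro t hLt htR'
  rcases le_or_gt t R with htR | hRt
  · exact h t hLt htR
  · rw [h' t (by omega) htR', h.eq_add_mul le_rfl hLL' hL'R]
    push_cast [Nat.cast_sub hLL', Nat.cast_sub (hLL'.trans (hL'R.trans hRt.le)),
      Nat.cast_sub (hL'R.trans hRt.le)]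
    ring

end UniformIntv

theorem IsSegment.left_eq_of_uniformIntv {r L R L' : ℕ} {x : ℕ → ℝ} (h : IsSegment r x L R)
    (hL' : L' ≤ L) (hu : UniformIntv x L' R) : L' = L :=
  (h.2.2.2 L' R hL' le_rfl h.2.1 hu).1

namespace memX

variable {r k : ℕ} {x : ℕ → ℝ}

theorem add_le_of_min_le (hx : memX r k x) (h0 : x 0 = 0) {a b : ℕ} (hab : a + b ≤ r)
    (hmin : min a b ≤ k) : x a + x b ≤ x (a + b) := by
  rcases Nat.eq_zero_or_pos a with rfl | ha
  · simp [h0]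
  rcases Nat.eq_zero_or_pos b with rfl | hb
  · simp [h0]
  rcases le_total a b with h | h
  · exact hx.2.2.2 a b ha (by omega) h hab
  · rw [add_comm (x a), add_comm a]
    exact hx.2.2.2 b a hb (by omega) h (by omega)

theorem add_mul_le (hx : memX r k x) (h0 : x 0 = 0) (hk : 1 ≤ k) {t : ℕ} :
    ∀ {d : ℕ}, t + d ≤ r → x t + (d : ℝ) * x 1 ≤ x (t + d)
  | 0, _ => by simp
  | d + 1, hd => by
    have ih := add_mul_le hx h0 hk (t := t) (d := d) (by omega)
    have hstep := hx.add_le_of_min_le h0 (a := t + d) (b := 1) (by omega)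
      (min_le_right _ _ |>.trans hk)
    push_cast
    rw [← add_assoc]
    linarith

theorem uniformIntv_of_add_eq (hx : memX r k x) (h0 : x 0 = 0) (hk : 1 ≤ k) {L i j : ℕ}
    (hu : UniformIntv x L i) (hmin : min i j ≤ k) (hijr : i + j ≤ r)
    (heq : x i + x j = x (i + j)) : UniformIntv x (L + j) (i + j) := by
  refine UniformIntv.of_add_mul_eq fun t hLt hti => le_antisymm ?_ ?_
  · simpa [Nat.add_sub_cancel' hti] using
      hx.add_mul_le h0 hk (t := t) (d := i + j - t) (by omega)
  · have hxi : x i = x (t - j) + ((i - (t - j) : ℕ) : ℝ) * x 1 :=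
      hu.eq_add_mul (by omega) (by omega) le_rfl
    have hsuper : x (t - j) + x j ≤ x t := by
      simpa [Nat.sub_add_cancel (show j ≤ t by omega)] using
        hx.add_le_of_min_le h0 (a := t - j) (b := j) (by omega)
          ((min_le_min_right j (Nat.sub_le_of_le_add (by omega))).trans hmin)
    rw [show i - (t - j) = i + j - t by omega] at hxi
    linarith

end memX

theorem strict_ineq_of_segments_left_general (r k : ℕ) (hk1 : 1 ≤ k)
    (x : ℕ → ℝ) (hx : memX r k x) (h0 : x 0 = 0)
    (L1 R1 L2 R2 : ℕ) (hseg1 : IsSegment r x L1 R1) (hseg2 : IsSegment r x L2 R2)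
    (i j : ℕ) (hiR : i ≤ R1) (hijL : L2 ≤ i + j) (hijR : i + j ≤ R2)
    (hgap : L1 + j < L2) (hmin : min i j ≤ k) :
    x i + x j < x (i + j) := by
  have hijr : i + j ≤ r := hijR.trans hseg2.2.1
  refine (hx.add_le_of_min_le h0 hijr hmin).lt_of_ne fun heq => hgap.ne ?_
  have hshift : UniformIntv x (L1 + j) (i + j) :=
    hx.uniformIntv_of_add_eq h0 hk1 (hseg1.2.2.1.mono hiR) hmin hijr heq
  exact hseg2.left_eq_of_uniformIntv hgap.le (hshift.union hseg2.2.2.1 hgap.le hijL)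

/-- **Lemma 3.5 (moving left).** Let `(x_1, …, x_r) ∈ X_{r,k}` with `x_0 = 0`, and let
`[L_1, R_1]`, `[L_2, R_2]` be segments with `L_1 < L_2`. If `i ∈ [L_1, R_1]` and
`i + j ∈ [L_2, R_2]` with `L_2 − L_1 > j` and `min i j ≤ k`, then `x_i + x_j < x_{i+j}`. -/
theorem strict_ineq_of_segments_left (r k : ℕ) (hr : 2 ≤ r) (hk1 : 1 ≤ k) (hk2 : k ≤ r / 2)
    (x : ℕ → ℝ) (hx : memX r k x) (h0 : x 0 = 0)
    (L1 R1 L2 R2 : ℕ) (hseg1 : IsSegment r x L1 R1) (hseg2 : IsSegment r x L2 R2)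
    (hLL : L1 < L2) (i j : ℕ) (hi : 1 ≤ i) (hj : 1 ≤ j)
    (hiL : L1 ≤ i) (hiR : i ≤ R1) (hijL : L2 ≤ i + j) (hijR : i + j ≤ R2)
    (hgap : L1 + j < L2) (hmin : min i j ≤ k) :
    x i + x j < x (i + j) :=
  strict_ineq_of_segments_left_general r k hk1 x hx h0 L1 R1 L2 R2 hseg1 hseg2 i j hiR hijL hijR
    hgap hmin
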